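/- arXiv:1112.1923 — 6 statements merged into one kernel-verified Lean document; each statement's English description precedes it below -/
import Mathlib

section
/- For every graph H and every integer n ≥ |V(H)|, the induced saturation number satisfies indsat(n, H) ≤ sat(n, H), where sat(n, H) is the (classical) saturation number of H. -/
open SimpleGraph

/-- A trigraph: the pairs of distinct vertices are partitioned into black edges,
gray edges, and (implicitly) white edges. -/
structure Trigraph (V : Type*) where
  /-- the graph of black edges -/
  black : SimpleGraph V
  /-- the graph of gray edges -/
  gray : SimpleGraph V
  /-- no pair is simultaneously black and gray -/
  disjoint : ∀ u v : V, ¬ (black.Adj u v ∧ gray.Adj u v)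

namespace Trigraph

variable {V : Type*} {W : Type*}

/-- `u v` is a white edge of `T`: the vertices are distinct and joined by neither a
black edge nor a gray edge. -/
def White (T : Trigraph V) (u v : V) : Prop :=
  u ≠ v ∧ ¬ T.black.Adj u v ∧ ¬ T.gray.Adj u v

/-- A realization of a trigraph is a graph containing every black edge and contained
in the union of the black and gray edges. -/
def IsRealization (T : Trigraph V) (R : SimpleGraph V) : Prop :=
  T.black ≤ R ∧ R ≤ T.black ⊔ T.gray

/-- The graph with the single edge `uv` (empty if `u = v`). -/
def single (u v : V) : SimpleGraph V := SimpleGraph.fromEdgeSet {s(u, v)}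

/-- The trigraph obtained from `T` by recoloring the pair `uv` gray. -/
def flip (T : Trigraph V) (u v : V) : Trigraph V where
  black := T.black \ single u v
  gray := T.gray ⊔ single u v
  disjoint := by
    intro a b h
    have := T.disjoint a b
    simp only [SimpleGraph.sdiff_adj, SimpleGraph.sup_adj] at h
    tauto

/-- `G` contains an induced copy of `H`. -/
def HasInducedCopy (H : SimpleGraph W) (G : SimpleGraph V) : Prop :=
  Nonempty (H ↪g G)

/-- A trigraph `T` is `H`-induced-saturated if no realization of `T` contains an
induced copy of `H`, but whenever any black or white edge of `T` is recolored gray,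
some realization of the resulting trigraph contains an induced copy of `H`. -/
def IsIndSat (H : SimpleGraph W) (T : Trigraph V) : Prop :=
  (∀ R : SimpleGraph V, T.IsRealization R → ¬ HasInducedCopy H R) ∧
  (∀ u v : V, u ≠ v → ¬ T.gray.Adj u v →
    ∃ R : SimpleGraph V, (T.flip u v).IsRealization R ∧ HasInducedCopy H R)

/-- The induced saturation number: the least number of gray edges in an
`H`-induced-saturated trigraph on `n` vertices (`⊤` if none exists). -/
noncomputable def indsat (n : ℕ) (H : SimpleGraph W) : ℕ∞ :=
  sInf {k : ℕ∞ | ∃ T : Trigraph (Fin n), IsIndSat H T ∧ (T.gray.edgeSet.ncard : ℕ∞) = k}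

/-- `G` contains a (not necessarily induced) copy of `H` as a subgraph. -/
def HasSubCopy (H : SimpleGraph W) (G : SimpleGraph V) : Prop :=
  ∃ f : W → V, Function.Injective f ∧ ∀ a b : W, H.Adj a b → G.Adj (f a) (f b)

/-- A graph `G` is `H`-saturated if it contains no copy of `H` but adding any new
edge creates a copy of `H`. -/
def IsSat (H : SimpleGraph W) (G : SimpleGraph V) : Prop :=
  ¬ HasSubCopy H G ∧
  ∀ u v : V, u ≠ v → ¬ G.Adj u v → HasSubCopy H (G ⊔ single u v)

/-- The saturation number: the least number of edges of an `H`-saturated graph on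
`n` vertices (`⊤` if none exists). -/
noncomputable def satNum (n : ℕ) (H : SimpleGraph W) : ℕ∞ :=
  sInf {k : ℕ∞ | ∃ G : SimpleGraph (Fin n), IsSat H G ∧ (G.edgeSet.ncard : ℕ∞) = k}

/-- The subtrigraph induced on a set of vertices. -/
def induce (s : Set V) (T : Trigraph V) : Trigraph s where
  black := T.black.induce s
  gray := T.gray.induce s
  disjoint := by
    intro a b h
    exact T.disjoint a b (by simpa using h)

/-- The complement trigraph: black and white edges are exchanged, gray edges are
unchanged. -/
def compl (T : Trigraph V) : Trigraph V where
  black := (T.black ⊔ T.gray)ᶜ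
  gray := T.gray
  disjoint := by
    intro a b h
    rcases h with ⟨hb, hg⟩
    rw [SimpleGraph.compl_adj] at hb
    exact hb.2 ((SimpleGraph.sup_adj _ _ _ _).mpr (Or.inr hg))

end Trigraph

/-! Color the edges of an `H`-saturated graph `G` gray and all other pairs white. The
realizations of this trigraph are exactly the subgraphs of `G`, and a graph contains a copy of `H`
iff one of its subgraphs contains an induced copy of `H` (the image of the copy). So the trigraph
is `H`-induced-saturated because `G` is `H`-saturated, and it has as many gray edges as `G` has
edges. -/

namespace Trigraph

variable {V W : Type*} {H : SimpleGraph W} {G R : SimpleGraph V}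

def ofGray (G : SimpleGraph V) : Trigraph V where
  black := ⊥
  gray := G
  disjoint _ _ h := h.1.elim

theorem isRealization_ofGray_iff : (ofGray G).IsRealization R ↔ R ≤ G := by
  simp [IsRealization, ofGray]

theorem flip_ofGray (G : SimpleGraph V) (u v : V) :
    (ofGray G).flip u v = ofGray (G ⊔ single u v) := by
  simp only [flip, ofGray, bot_sdiff]

theorem HasInducedCopy.hasSubCopy (h : HasInducedCopy H G) : HasSubCopy H G :=
  let ⟨φ⟩ := h
  ⟨φ, φ.injective, fun _ _ hab => φ.map_rel_iff.mpr hab⟩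

theorem HasSubCopy.mono {G' : SimpleGraph V} (h : HasSubCopy H G)
    (hle : G ≤ G') : HasSubCopy H G' :=
  let ⟨f, hf, hadj⟩ := h
  ⟨f, hf, fun a b hab => hle (hadj a b hab)⟩

theorem exists_le_hasInducedCopy_iff : (∃ R ≤ G, HasInducedCopy H R) ↔ HasSubCopy H G := by
  constructor
  · rintro ⟨R, hle, hR⟩
    exact hR.hasSubCopy.mono hle
  · rintro ⟨f, hf, hadj⟩
    refine ⟨H.map (⟨f, hf⟩ : W ↪ V), ?_, ⟨Embedding.map ⟨f, hf⟩ H⟩⟩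
    rintro _ _ ⟨-, a, b, hab, rfl, rfl⟩
    exact hadj a b hab

theorem isIndSat_ofGray_iff : IsIndSat H (ofGray G) ↔ IsSat H G := by
  simp only [IsIndSat, IsSat, flip_ofGray, isRealization_ofGray_iff, ← exists_le_hasInducedCopy_iff]
  simp [ofGray]

end Trigraph

theorem indsat_le_satNum_general {W : Type*} (H : SimpleGraph W) (n : ℕ) :
    Trigraph.indsat n H ≤ Trigraph.satNum n H := by
  apply sInf_le_sInf
  rintro k ⟨G, hG, rfl⟩
  exact ⟨Trigraph.ofGray G, Trigraph.isIndSat_ofGray_iff.mpr hG, rfl⟩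

/-- For every graph `H` and every `n ≥ |V(H)|`,
`indsat(n, H) ≤ sat(n, H)`. -/
theorem indsat_le_satNum {W : Type*} [Fintype W] (H : SimpleGraph W) (n : ℕ)
    (hn : Fintype.card W ≤ n) :
    Trigraph.indsat n H ≤ Trigraph.satNum n H :=
  indsat_le_satNum_general H n
end

section
/- Let K_h^- denote the graph on h vertices obtained from the complete graph K_h by deleting exactly one edge. Then for all integers n ≥ h ≥ 3, indsat(n, K_h^-) = 0. -/
/-
The trigraph with every pair black and no gray pair does the job. Its only realization
is the complete graph, in which every induced subgraph is complete, so it contains no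
induced `K_h^-`. Recoloring a pair `uv` gray admits the realization `K_n - uv`, and any
`h` vertices of it containing `u` and `v` induce `K_h^-`.
-/

open SimpleGraph

namespace Trigraph

variable {V W : Type*}

theorem single_adj {u v x y : V} : (single u v).Adj x y ↔ s(x, y) = s(u, v) ∧ x ≠ y := by
  simp [single]

def topSdiffSingleEmbedding (f : W ↪ V) (a b : W) :
    (⊤ \ single a b : SimpleGraph W) ↪g (⊤ \ single (f a) (f b)) where
  toEmbedding := f
  map_rel_iff' := by
    intro x y
    simp [single_adj]

theorem exists_embedding_apply_eq_pair {a b : W} {u v : V} (hab : a ≠ b) (huv : u ≠ v)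
    (f : W ↪ V) : ∃ g : W ↪ V, g a = u ∧ g b = v := by
  classical
  refine ⟨(f.setValue a u).setValue b v, ?_, Function.Embedding.setValue_eq _ _ _⟩
  rw [Function.Embedding.setValue_eq_of_ne hab (by rwa [Function.Embedding.setValue_eq]),
    Function.Embedding.setValue_eq]

theorem hasInducedCopy_top_sdiff_single {a b : W} {u v : V} (hab : a ≠ b) (huv : u ≠ v)
    (f : W ↪ V) : HasInducedCopy (⊤ \ single a b) (⊤ \ single u v : SimpleGraph V) := by
  obtain ⟨g, rfl, rfl⟩ := exists_embedding_apply_eq_pair hab huv f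
  exact ⟨topSdiffSingleEmbedding g a b⟩

theorem not_hasInducedCopy_top {H : SimpleGraph W} {a b : W} (hab : a ≠ b)
    (hnadj : ¬ H.Adj a b) : ¬ HasInducedCopy H (⊤ : SimpleGraph V) :=
  fun ⟨e⟩ => hnadj (e.map_rel_iff.mp (e.injective.ne hab))

def ofGraph (G : SimpleGraph V) : Trigraph V := ⟨G, ⊥, by simp⟩

theorem isRealization_ofGraph_iff {G R : SimpleGraph V} :
    (ofGraph G).IsRealization R ↔ R = G := by
  simp only [IsRealization, ofGraph, sup_bot_eq]
  exact ⟨fun ⟨hGR, hRG⟩ => le_antisymm hRG hGR, fun h => ⟨h.ge, h.le⟩⟩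

theorem isRealization_flip_black_sdiff_single (T : Trigraph V) (u v : V) :
    (T.flip u v).IsRealization (T.black \ single u v) :=
  ⟨le_rfl, le_sup_left⟩

theorem isIndSat_ofGraph_top {a b : W} (hab : a ≠ b) (f : W ↪ V) :
    IsIndSat (⊤ \ single a b) (ofGraph (⊤ : SimpleGraph V)) := by
  refine ⟨fun R hR => ?_, fun u v huv _ => ?_⟩
  · rw [isRealization_ofGraph_iff.mp hR]
    exact not_hasInducedCopy_top hab (by simp [single_adj])
  · exact ⟨_, isRealization_flip_black_sdiff_single _ u v,
      hasInducedCopy_top_sdiff_single hab huv f⟩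

theorem indsat_le_of_isIndSat {n : ℕ} {H : SimpleGraph W} {T : Trigraph (Fin n)}
    (hT : IsIndSat H T) : indsat n H ≤ T.gray.edgeSet.ncard :=
  sInf_le ⟨T, hT, rfl⟩

end Trigraph

/-- For `K_h^-`, the complete graph on `h` vertices with one edge
deleted, and all `n ≥ h ≥ 3`, `indsat(n, K_h^-) = 0`. -/
theorem indsat_completeMinusEdge (n h : ℕ) (hh : 3 ≤ h) (hn : h ≤ n) :
    Trigraph.indsat n
      ((⊤ : SimpleGraph (Fin h)) \
        Trigraph.single (⟨0, by omega⟩ : Fin h) (⟨1, by omega⟩ : Fin h)) = 0 := by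
  refine nonpos_iff_eq_zero.mp ((Trigraph.indsat_le_of_isIndSat
    (Trigraph.isIndSat_ofGraph_top (V := Fin n) ?_ (Fin.castLEEmb hn))).trans ?_)
  · simp [Fin.ext_iff]
  · simp [Trigraph.ofGraph]
end

section
/- For all integers n ≥ 4, there exists a P_4-induced-saturated trigraph on n vertices with exactly ⌈(n+1)/3⌉ gray edges; hence indsat(n, P_4) ≤ ⌈(n+1)/3⌉. -/
open SimpleGraph

/-!
Take `g = ⌈(n+1)/3⌉` disjoint gray edges and let the remaining `n - 2g < g` vertices form a
black clique whose neighbourhoods on the pairs are nested. In every realization the non-clique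
vertices span a matching, the two ends of a pair are twins over the clique, and the clique
neighbourhoods stay nested; these three properties already exclude an induced `P_4`. Conversely,
after recoloring a black or white pair gray an induced `P_4` is exhibited directly (for two
vertices of different pairs: partner, vertex, vertex, partner); the bound `n - 2g < g` keeps every
clique vertex adjacent to pairs `0` and `1`, which supplies the missing endpoints.
-/

namespace Trigraph

variable {V : Type*}

lemma flip_comm (T : Trigraph V) (u v : V) : T.flip u v = T.flip v u := by
  unfold flip single
  congr 1 <;> rw [Sym2.eq_swap]

lemma flip_black_adj {T : Trigraph V} {u v x y : V} :
    (T.flip u v).black.Adj x y ↔ T.black.Adj x y ∧ ¬ (x = u ∧ y = v ∨ x = v ∧ y = u) := by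
  simp only [flip, single, sdiff_adj, fromEdgeSet_adj, Set.mem_singleton_iff, Sym2.eq_iff]
  exact and_congr_right fun h => by simp [h.ne]

lemma edge_le_flip_gray (T : Trigraph V) (u v : V) : edge u v ≤ (T.flip u v).gray :=
  le_sup_right

lemma edge_le_flip_gray_of_adj {T : Trigraph V} {x y : V} (h : T.gray.Adj x y) (u v : V) :
    edge x y ≤ (T.flip u v).gray :=
  le_sup_of_le_left ((edge_le_iff _).2 (.inr h))

lemma isRealization_black (T : Trigraph V) : T.IsRealization T.black :=
  ⟨le_rfl, le_sup_left⟩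

lemma isRealization_black_sup {T : Trigraph V} {S : SimpleGraph V} (h : S ≤ T.gray) :
    T.IsRealization (T.black ⊔ S) :=
  ⟨le_sup_left, sup_le_sup_left h _⟩

lemma hasInducedCopy_pathGraph_four_iff {G : SimpleGraph V} :
    HasInducedCopy (pathGraph 4) G ↔ ∃ a b c d, G.Adj a b ∧ G.Adj b c ∧ G.Adj c d ∧
      ¬ G.Adj a c ∧ ¬ G.Adj a d ∧ ¬ G.Adj b d := by
  constructor
  · rintro ⟨f⟩
    refine ⟨f 0, f 1, f 2, f 3, ?_, ?_, ?_, ?_, ?_, ?_⟩ <;> simp [pathGraph_adj]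
  · rintro ⟨a, b, c, d, hab, hbc, hcd, hac, had, hbd⟩
    have hac' : a ≠ c := by rintro rfl; exact had hcd
    have had' : a ≠ d := by rintro rfl; exact hac hcd.symm
    have hbd' : b ≠ d := by rintro rfl; exact had hab
    refine ⟨⟨⟨![a, b, c, d], fun i j hij => ?_⟩, fun {i j} => ?_⟩⟩
    · fin_cases i <;> fin_cases j <;> simp_all [hab.ne, hbc.ne, hcd.ne, eq_comm]
    · change G.Adj (![a, b, c, d] i) (![a, b, c, d] j) ↔ _
      fin_cases i <;> fin_cases j <;>
        simp [pathGraph_adj, hab, hbc, hcd, hac, had, hbd, adj_comm]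

theorem not_hasInducedCopy_pathGraph_four_of_nested_clique {G : SimpleGraph V} {A : Set V}
    (hclique : G.IsClique A)
    (hmatching : ∀ ⦃x y z⦄, x ∉ A → y ∉ A → z ∉ A → G.Adj x y → G.Adj y z → x = z)
    (htwin : ∀ ⦃x y a⦄, x ∉ A → y ∉ A → a ∈ A → G.Adj x y → G.Adj x a → G.Adj y a)
    (hnested : ∀ ⦃a b x y⦄, a ∈ A → b ∈ A → x ∉ A → y ∉ A →
      G.Adj a x → ¬ G.Adj b x → G.Adj b y → G.Adj a y) :
    ¬ HasInducedCopy (pathGraph 4) G := by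
  rw [hasInducedCopy_pathGraph_four_iff]
  rintro ⟨a, b, c, d, hab, hbc, hcd, hac, had, hbd⟩
  have hac' : a ∈ A → c ∉ A := fun ha hc =>
    hac (hclique ha hc (by rintro rfl; exact had hcd))
  have had' : a ∈ A → d ∉ A := fun ha hd =>
    had (hclique ha hd (by rintro rfl; exact hac hcd.symm))
  have hbd' : b ∈ A → d ∉ A := fun hb hd =>
    hbd (hclique hb hd (by rintro rfl; exact had hab))
  by_cases hb : b ∈ A <;> by_cases hc : c ∈ A
  · exact hbd (hnested hb hc (fun ha => hac' ha hc) (hbd' hb) hab.symm (fun h => hac h.symm) hcd)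
  · exact hbd (htwin hc (hbd' hb) hb hcd hbc.symm).symm
  · exact hac (htwin hb (fun ha => hac' ha hc) hc hab.symm hbc)
  · by_cases ha : a ∈ A
    · exact had (hmatching hb hc (had' ha) hbc hcd ▸ hab)
    · exact had (hmatching ha hb hc hab hbc ▸ hcd)

/-- The vertices `2j, 2j + 1` (`j < g`) form the `g` gray pairs, and the vertices `2g + d` form a
black clique; `2g + d` is joined in black to both vertices of pair `j` iff `d + j < g`. -/
def pairedThreshold (n g : ℕ) : Trigraph (Fin n) where
  black := fromRel fun u v => 2 * g ≤ u.val ∧ (2 * g ≤ v.val ∨ u.val - 2 * g + v.val / 2 < g)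
  gray := fromRel fun u v => u.val < 2 * g ∧ u.val / 2 = v.val / 2
  disjoint u v := by
    simp only [fromRel_adj]
    omega

variable {n g : ℕ}

lemma pairedThreshold_black_adj {u v : Fin n} :
    (pairedThreshold n g).black.Adj u v ↔ u ≠ v ∧
      (2 * g ≤ u.val ∧ (2 * g ≤ v.val ∨ u.val - 2 * g + v.val / 2 < g) ∨
        2 * g ≤ v.val ∧ (2 * g ≤ u.val ∨ v.val - 2 * g + u.val / 2 < g)) :=
  fromRel_adj _ _ _

lemma pairedThreshold_gray_adj {u v : Fin n} :
    (pairedThreshold n g).gray.Adj u v ↔ u ≠ v ∧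
      (u.val < 2 * g ∧ u.val / 2 = v.val / 2 ∨ v.val < 2 * g ∧ v.val / 2 = u.val / 2) :=
  fromRel_adj _ _ _

theorem pairedThreshold_gray_edgeSet_ncard (h2g : 2 * g ≤ n) :
    (pairedThreshold n g).gray.edgeSet.ncard = g := by
  let pairEdge (j : Fin g) : Sym2 (Fin n) := s(⟨2 * j, by omega⟩, ⟨2 * j + 1, by omega⟩)
  have hinj : pairEdge.Injective := by
    intro i j h
    simp only [pairEdge, Sym2.eq_iff, Fin.ext_iff] at h
    omega
  have hrange : (pairedThreshold n g).gray.edgeSet = Set.range pairEdge := by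
    ext e
    induction e using Sym2.ind with | _ u v => ?_
    simp only [mem_edgeSet, pairedThreshold_gray_adj, Set.mem_range, pairEdge, Sym2.eq_iff,
      Fin.ext_iff]
    constructor
    · exact fun h => ⟨⟨u / 2, by omega⟩, by dsimp only; omega⟩
    · rintro ⟨j, h⟩
      omega
  rw [hrange, Set.ncard_range_of_injective hinj, Nat.card_eq_fintype_card, Fintype.card_fin]

theorem pairedThreshold_isRealization_not_hasInducedCopy {R : SimpleGraph (Fin n)}
    (hR : (pairedThreshold n g).IsRealization R) : ¬ HasInducedCopy (pathGraph 4) R := by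
  have hblack {u v : Fin n} (h : (pairedThreshold n g).black.Adj u v) : R.Adj u v := hR.1 h
  have hsub {u v : Fin n} (h : R.Adj u v) := hR.2 h
  simp only [sup_adj, pairedThreshold_black_adj, pairedThreshold_gray_adj] at hblack hsub
  refine not_hasInducedCopy_pathGraph_four_of_nested_clique (A := {v | 2 * g ≤ v.val})
    (fun x hx y hy hxy => hblack ⟨hxy, ?_⟩) (fun x y z hx hy hz hxy hyz => ?_)
    (fun x y a hx hy ha hxy hxa => hblack ?_) (fun a b x y ha hb hx hy hax hbx hby => hblack ?_)
  all_goals simp only [Set.mem_ofPred_eq] at *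
  · omega
  · have := hsub hxy; have := hsub hyz; omega
  · have := hsub hxy; have := hsub hxa; omega
  · have := hsub hax; have := hsub hby; have := mt hblack hbx; omega

lemma pairedThreshold_exists_gray_adj (h2g : 2 * g ≤ n) {u : Fin n} (hu : u.val < 2 * g) :
    ∃ p : Fin n, (pairedThreshold n g).gray.Adj p u ∧ p.val ≠ u.val ∧ p.val / 2 = u.val / 2 :=
  have hp : 2 * (u / 2) + 1 - u % 2 < n := by omega
  ⟨⟨_, hp⟩, pairedThreshold_gray_adj.2 (by simp only [ne_eq, Fin.ext_iff]; omega), by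
    dsimp only; omega⟩

theorem pairedThreshold_flip_pair_pair (h2g : 2 * g ≤ n) {u v : Fin n}
    (hu : u.val < 2 * g) (hv : v.val < 2 * g) (huv : u.val / 2 ≠ v.val / 2) :
    ∃ R, ((pairedThreshold n g).flip u v).IsRealization R ∧ HasInducedCopy (pathGraph 4) R := by
  obtain ⟨p, hpu, hp⟩ := pairedThreshold_exists_gray_adj h2g hu
  obtain ⟨q, hqv, hq⟩ := pairedThreshold_exists_gray_adj h2g hv
  refine ⟨_ ⊔ (edge p u ⊔ edge u v ⊔ edge q v), isRealization_black_sup (sup_le (sup_le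
    (edge_le_flip_gray_of_adj hpu u v) (edge_le_flip_gray _ u v)) (edge_le_flip_gray_of_adj hqv u v)),
    hasInducedCopy_pathGraph_four_iff.2 ⟨p, u, v, q, ?_⟩⟩
  simp only [sup_adj, flip_black_adj, edge_adj, pairedThreshold_black_adj, ne_eq, Fin.ext_iff,
    and_true, true_and, true_or, or_true, not_true_eq_false, false_or, and_false]
  omega

theorem pairedThreshold_flip_pair_clique_black (h2g : 2 * g ≤ n) (h3g : n + 1 ≤ 3 * g)
    {u v : Fin n} (hu : u.val < 2 * g) (hv : 2 * g ≤ v.val) (huv : v.val - 2 * g + u.val / 2 < g) :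
    ∃ R, ((pairedThreshold n g).flip u v).IsRealization R ∧ HasInducedCopy (pathGraph 4) R := by
  obtain ⟨p, hpu, hp⟩ := pairedThreshold_exists_gray_adj h2g hu
  obtain ⟨w, hwu, hw⟩ : ∃ w : Fin n, w.val / 2 ≠ u.val / 2 ∧ w.val / 2 ≤ 1 := by
    by_cases h : u.val / 2 = 0
    · exact ⟨⟨2, by omega⟩, by dsimp only; omega, by dsimp only; omega⟩
    · exact ⟨⟨0, by omega⟩, by dsimp only; omega, by dsimp only; omega⟩
  refine ⟨_ ⊔ edge p u, isRealization_black_sup (edge_le_flip_gray_of_adj hpu u v),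
    hasInducedCopy_pathGraph_four_iff.2 ⟨u, p, v, w, ?_⟩⟩
  simp only [sup_adj, flip_black_adj, edge_adj, pairedThreshold_black_adj, ne_eq, Fin.ext_iff,
    and_true, true_and, true_or, or_true, not_true_eq_false, false_or, and_false]
  omega

theorem pairedThreshold_flip_pair_clique_white (h2g : 2 * g ≤ n) (h3g : n + 1 ≤ 3 * g)
    {u v : Fin n} (hu : u.val < 2 * g) (hv : 2 * g ≤ v.val) (huv : g ≤ v.val - 2 * g + u.val / 2) :
    ∃ R, ((pairedThreshold n g).flip u v).IsRealization R ∧ HasInducedCopy (pathGraph 4) R := by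
  obtain ⟨p, hpu, hp⟩ := pairedThreshold_exists_gray_adj h2g hu
  refine ⟨_ ⊔ (edge p u ⊔ edge u v), isRealization_black_sup (sup_le
    (edge_le_flip_gray_of_adj hpu u v) (edge_le_flip_gray _ u v)),
    hasInducedCopy_pathGraph_four_iff.2 ⟨p, u, v, ⟨0, by omega⟩, ?_⟩⟩
  simp only [sup_adj, flip_black_adj, edge_adj, pairedThreshold_black_adj, ne_eq, Fin.ext_iff,
    and_true, true_and, true_or, not_true_eq_false, false_or, and_false]
  omega

theorem pairedThreshold_flip_pair_clique (h2g : 2 * g ≤ n) (h3g : n + 1 ≤ 3 * g)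
    {u v : Fin n} (hu : u.val < 2 * g) (hv : 2 * g ≤ v.val) :
    ∃ R, ((pairedThreshold n g).flip u v).IsRealization R ∧ HasInducedCopy (pathGraph 4) R := by
  rcases lt_or_ge (v.val - 2 * g + u.val / 2) g with huv | huv
  · exact pairedThreshold_flip_pair_clique_black h2g h3g hu hv huv
  · exact pairedThreshold_flip_pair_clique_white h2g h3g hu hv huv

/-- The first vertex of pair `3g - v` is a neighbour of `u` but not of `v`. -/
theorem pairedThreshold_flip_clique_clique (h3g : n + 1 ≤ 3 * g) {u v : Fin n}
    (hu : 2 * g ≤ u.val) (huv : u.val < v.val) :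
    ∃ R, ((pairedThreshold n g).flip u v).IsRealization R ∧ HasInducedCopy (pathGraph 4) R := by
  refine ⟨_, isRealization_black _, hasInducedCopy_pathGraph_four_iff.2
    ⟨⟨2 * (3 * g - v), by omega⟩, u, ⟨0, by omega⟩, v, ?_⟩⟩
  simp only [flip_black_adj, pairedThreshold_black_adj, ne_eq, Fin.ext_iff,
    and_true, true_and, true_or, not_true_eq_false, not_false_eq_true, and_false]
  omega

theorem pairedThreshold_flip_hasInducedCopy (h2g : 2 * g ≤ n) (h3g : n + 1 ≤ 3 * g)
    {u v : Fin n} (huv : u ≠ v) (hgray : ¬ (pairedThreshold n g).gray.Adj u v) :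
    ∃ R, ((pairedThreshold n g).flip u v).IsRealization R ∧ HasInducedCopy (pathGraph 4) R := by
  rw [pairedThreshold_gray_adj] at hgray
  rcases lt_or_ge u.val (2 * g) with hu | hu <;> rcases lt_or_ge v.val (2 * g) with hv | hv
  · exact pairedThreshold_flip_pair_pair h2g hu hv (by omega)
  · exact pairedThreshold_flip_pair_clique h2g h3g hu hv
  · exact flip_comm _ u v ▸ pairedThreshold_flip_pair_clique h2g h3g hv hu
  · rcases Fin.lt_or_lt_of_ne huv with h | h
    · exact pairedThreshold_flip_clique_clique h3g hu h
    · exact flip_comm _ u v ▸ pairedThreshold_flip_clique_clique h3g hv h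

theorem pairedThreshold_isIndSat (h2g : 2 * g ≤ n) (h3g : n + 1 ≤ 3 * g) :
    IsIndSat (pathGraph 4) (pairedThreshold n g) :=
  ⟨fun _ => pairedThreshold_isRealization_not_hasInducedCopy,
    fun _ _ => pairedThreshold_flip_hasInducedCopy h2g h3g⟩

end Trigraph

/-- For all `n ≥ 4`, there is a `P_4`-induced-saturated trigraph on
`n` vertices with exactly `⌈(n+1)/3⌉` gray edges; hence
`indsat(n, P_4) ≤ ⌈(n+1)/3⌉`. -/
theorem indsat_pathGraph_four_upper (n : ℕ) (hn : 4 ≤ n) :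
    (∃ T : Trigraph (Fin n), Trigraph.IsIndSat (SimpleGraph.pathGraph 4) T ∧
        T.gray.edgeSet.ncard = (n + 1 + 2) / 3) ∧
    Trigraph.indsat n (SimpleGraph.pathGraph 4) ≤ (((n + 1 + 2) / 3 : ℕ) : ℕ∞) := by
  have hsat := Trigraph.pairedThreshold_isIndSat (n := n) (g := (n + 1 + 2) / 3)
    (by omega) (by omega)
  have hcard := Trigraph.pairedThreshold_gray_edgeSet_ncard (n := n) (g := (n + 1 + 2) / 3)
    (by omega)
  exact ⟨⟨_, hsat, hcard⟩, sInf_le ⟨_, hsat, by rw [hcard]⟩⟩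
end

section
/- Let T be a P_4-induced-saturated trigraph and let C = {u, v_1, …, v_{k−1}} with k ≥ 2 be the vertex set of a gray star in T with center u (i.e., the edges uv_i are gray and C is a gray component). Then V(T) − C can be partitioned into sets X, Y, Z such that: (1) for every x ∈ X, the edges xu and xv_i are black for all i; (2) for every y ∈ Y, the edges yu and yv_i are white for all i; and (3) either all edges v_iv_j (i ≠ j) and all edges v_iz (z ∈ Z) are white while all edges uz (z ∈ Z) are black, or all edges v_iv_j (i ≠ j) and all edges v_iz (z ∈ Z) are black while all edges uz (z ∈ Z) are white. -/
/-!
Every step is the same move: if `a b c d` are distinct, `ab`, `bc`, `cd` are not white and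
`ac`, `ad`, `bd` are not black, then the realization switching on exactly the gray pairs among
`ab`, `bc`, `cd` contains the induced path `a b c d`. Around the star this shows that a vertex
outside `C` sees all leaves in one color, that all leaf pairs have one color, and that a vertex
outside `C` which is not uniform on `C` is black to `u` and white to the leaves or the reverse;
each of these two types fixes the color of the leaf pairs and excludes the other type.
-/

open SimpleGraph

namespace Trigraph

variable {V W : Type*} {T : Trigraph V} {a b c d : V}

theorem White.symm (h : T.White a b) : T.White b a :=
  ⟨h.1.symm, fun hb ↦ h.2.1 hb.symm, fun hg ↦ h.2.2 hg.symm⟩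

theorem White.not_black (h : T.White a b) : ¬ T.black.Adj a b := h.2.1

theorem not_black_of_gray (h : T.gray.Adj a b) : ¬ T.black.Adj a b :=
  fun hb ↦ T.disjoint a b ⟨hb, h⟩

theorem black_or_white_of_not_gray (hab : a ≠ b) (h : ¬ T.gray.Adj a b) :
    T.black.Adj a b ∨ T.White a b :=
  or_iff_not_imp_left.2 fun hb ↦ ⟨hab, hb, h⟩

theorem isRealization_black_sup_gray_inf (G : SimpleGraph V) :
    T.IsRealization (T.black ⊔ T.gray ⊓ G) :=
  ⟨le_sup_left, sup_le_sup_left inf_le_left _⟩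

theorem hasInducedCopy_pathGraph_four {G : SimpleGraph V}
    (hac : a ≠ c) (had : a ≠ d) (hbd : b ≠ d)
    (hab : G.Adj a b) (hbc : G.Adj b c) (hcd : G.Adj c d)
    (nac : ¬ G.Adj a c) (nad : ¬ G.Adj a d) (nbd : ¬ G.Adj b d) :
    HasInducedCopy (pathGraph 4) G := by
  have := hab.ne; have := hbc.ne; have := hcd.ne
  refine ⟨⟨⟨![a, b, c, d], fun i j h ↦ ?_⟩, fun {i j} ↦ ?_⟩⟩
  · fin_cases i <;> fin_cases j <;> simp_all [eq_comm]
  · change G.Adj (![a, b, c, d] i) (![a, b, c, d] j) ↔ _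
    fin_cases i <;> fin_cases j <;> simp_all [pathGraph_adj, G.adj_comm]

def IsIndFree (H : SimpleGraph W) (T : Trigraph V) : Prop :=
  ∀ R : SimpleGraph V, T.IsRealization R → ¬ HasInducedCopy H R

theorem IsIndFree.false_of_path (hT : T.IsIndFree (pathGraph 4))
    (hac : a ≠ c) (had : a ≠ d) (hbd : b ≠ d)
    (hab : T.black.Adj a b ∨ T.gray.Adj a b) (hbc : T.black.Adj b c ∨ T.gray.Adj b c)
    (hcd : T.black.Adj c d ∨ T.gray.Adj c d)
    (nac : ¬ T.black.Adj a c) (nad : ¬ T.black.Adj a d) (nbd : ¬ T.black.Adj b d) : False := by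
  have := hab.elim SimpleGraph.Adj.ne SimpleGraph.Adj.ne
  have := hbc.elim SimpleGraph.Adj.ne SimpleGraph.Adj.ne
  have := hcd.elim SimpleGraph.Adj.ne SimpleGraph.Adj.ne
  refine hT _ (isRealization_black_sup_gray_inf (fromEdgeSet {s(a, b), s(b, c), s(c, d)}))
    (hasInducedCopy_pathGraph_four hac had hbd ?_ ?_ ?_ ?_ ?_ ?_) <;>
  simp only [sup_adj, inf_adj, fromEdgeSet_adj, Set.mem_insert_iff, Set.mem_singleton_iff,
    Sym2.eq_iff] <;> tauto

variable {C : Set V} {u v v' w z z' : V}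

structure IsGrayStarComponent (T : Trigraph V) (C : Set V) (u : V) : Prop where
  center_mem : u ∈ C
  gray_adj_center : ∀ v ∈ C, v ≠ u → T.gray.Adj u v
  not_gray_adj_leaves : ∀ v ∈ C, ∀ w ∈ C, v ≠ u → w ≠ u → ¬ T.gray.Adj v w
  mem_of_gray_adj : ∀ v ∈ C, ∀ w, T.gray.Adj v w → w ∈ C

namespace IsGrayStarComponent

theorem black_or_white_of_not_mem (hS : T.IsGrayStarComponent C u) (hw : w ∉ C) (hv : v ∈ C) :
    T.black.Adj w v ∨ T.White w v :=
  black_or_white_of_not_gray (fun h ↦ hw (h ▸ hv))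
    fun hg ↦ hw (hS.mem_of_gray_adj v hv w hg.symm)

theorem black_or_white_leaves (hS : T.IsGrayStarComponent C u) (hv : v ∈ C) (hv' : v' ∈ C)
    (hvu : v ≠ u) (hv'u : v' ≠ u) (hvv' : v ≠ v') : T.black.Adj v v' ∨ T.White v v' :=
  black_or_white_of_not_gray hvv' (hS.not_gray_adj_leaves v hv v' hv' hvu hv'u)

theorem black_leaf_of_black_leaf (hP : T.IsIndFree (pathGraph 4))
    (hS : T.IsGrayStarComponent C u) (hw : w ∉ C) (hv : v ∈ C) (hvu : v ≠ u)
    (hv' : v' ∈ C) (hv'u : v' ≠ u) (hwv : T.black.Adj w v) : T.black.Adj w v' := by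
  by_contra hwv'
  replace hwv' := (hS.black_or_white_of_not_mem hw hv').resolve_left hwv'
  have hvv' : v ≠ v' := by rintro rfl; exact hwv'.not_black hwv
  have huv := hS.gray_adj_center v hv hvu
  have huv' := hS.gray_adj_center v' hv' hv'u
  rcases hS.black_or_white_leaves hv hv' hvu hv'u hvv' with hbvv' | hwvv' <;>
    rcases hS.black_or_white_of_not_mem hw hS.center_mem with hwu | hwu
  · exact hP.false_of_path hvu.symm hv'u.symm hwv'.1 (.inl hwu.symm) (.inl hwv) (.inl hbvv')
      (not_black_of_gray huv) (not_black_of_gray huv') hwv'.not_black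
  · exact hP.false_of_path hwv'.1 hwu.1 hvu (.inl hwv) (.inl hbvv') (.inr huv'.symm)
      hwv'.not_black hwu.not_black (not_black_of_gray huv.symm)
  · exact hP.false_of_path hvu hvv' hwv'.1 (.inl hwv.symm) (.inl hwu) (.inr huv')
      (not_black_of_gray huv.symm) hwvv'.not_black hwv'.not_black
  · exact hP.false_of_path hwu.1 hwv'.1 hvv' (.inl hwv) (.inr huv.symm) (.inr huv')
      hwu.not_black hwv'.not_black hwvv'.not_black

theorem black_of_black_leaves (hP : T.IsIndFree (pathGraph 4)) (hS : T.IsGrayStarComponent C u)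
    (hv : v ∈ C) (hvu : v ≠ u) (hv' : v' ∈ C) (hv'u : v' ≠ u) (hw : w ∈ C) (hwu : w ≠ u)
    (hvw : v ≠ w) (hvv' : T.black.Adj v v') : T.black.Adj v w := by
  obtain rfl | hv'w := eq_or_ne v' w
  · exact hvv'
  by_contra hbvw
  replace hvw := (hS.black_or_white_leaves hv hw hvu hwu hvw).resolve_left hbvw
  have huv := hS.gray_adj_center v hv hvu
  have huv' := hS.gray_adj_center v' hv' hv'u
  have huw := hS.gray_adj_center w hw hwu
  have hv'w : T.black.Adj v' w := by
    by_contra hb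
    exact hP.false_of_path hv'u hv'w hvw.1 (.inl hvv'.symm) (.inr huv.symm) (.inr huw)
      (not_black_of_gray huv'.symm) hb hvw.not_black
  exact hP.false_of_path hvw.1 hvu hv'u (.inl hvv') (.inl hv'w) (.inr huw.symm)
    hvw.not_black (not_black_of_gray huv.symm) (not_black_of_gray huv'.symm)

theorem leaves_white_or_black (hP : T.IsIndFree (pathGraph 4))
    (hS : T.IsGrayStarComponent C u) :
    (∀ v ∈ C, ∀ w ∈ C, v ≠ u → w ≠ u → v ≠ w → T.White v w) ∨
      (∀ v ∈ C, ∀ w ∈ C, v ≠ u → w ≠ u → v ≠ w → T.black.Adj v w) := by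
  refine or_iff_not_imp_left.2 fun hW ↦ ?_
  push Not at hW
  obtain ⟨v, hv, v', hv', hvu, hv'u, hvv', hnW⟩ := hW
  have hbvv' := (hS.black_or_white_leaves hv hv' hvu hv'u hvv').resolve_right hnW
  intro a ha b hb hau hbu hab
  obtain rfl | hva := eq_or_ne v a
  · exact hS.black_of_black_leaves hP hv hvu hv' hv'u hb hbu hab hbvv'
  have hav := (hS.black_of_black_leaves hP hv hvu hv' hv'u ha hau hva hbvv').symm
  exact hS.black_of_black_leaves hP ha hau hv hvu hb hbu hab hav

theorem black_center_or_white_center (hP : T.IsIndFree (pathGraph 4))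
    (hS : T.IsGrayStarComponent C u) (hw : w ∉ C) (hnB : ¬ ∀ c ∈ C, T.black.Adj w c)
    (hnW : ¬ ∀ c ∈ C, T.White w c) :
    (T.black.Adj u w ∧ ∀ v ∈ C, v ≠ u → T.White w v) ∨
      (T.White u w ∧ ∀ v ∈ C, v ≠ u → T.black.Adj w v) := by
  push Not at hnB hnW
  obtain ⟨c, hc, hwc⟩ := hnB
  obtain ⟨c', hc', hwc'⟩ := hnW
  rcases hS.black_or_white_of_not_mem hw hS.center_mem with hwu | hwu
  · have hcu : c ≠ u := by rintro rfl; exact hwc hwu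
    refine .inl ⟨hwu.symm, fun v hv hvu ↦ ?_⟩
    refine (hS.black_or_white_of_not_mem hw hv).resolve_left fun hwv ↦ hwc ?_
    exact hS.black_leaf_of_black_leaf hP hw hv hvu hc hcu hwv
  · have hwc' := (hS.black_or_white_of_not_mem hw hc').resolve_right hwc'
    have hc'u : c' ≠ u := by rintro rfl; exact hwu.not_black hwc'
    exact .inr ⟨hwu.symm, fun v hv hvu ↦
      hS.black_leaf_of_black_leaf hP hw hc' hc'u hv hvu hwc'⟩

theorem white_leaves_of_black_center (hP : T.IsIndFree (pathGraph 4))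
    (hS : T.IsGrayStarComponent C u) (hzu : T.black.Adj u z)
    (hz : ∀ v ∈ C, v ≠ u → T.White z v) (hv : v ∈ C) (hv' : v' ∈ C) (hvu : v ≠ u)
    (hv'u : v' ≠ u) (hvv' : v ≠ v') : T.White v v' := by
  refine (hS.black_or_white_leaves hv hv' hvu hv'u hvv').resolve_left fun hbvv' ↦ ?_
  exact hP.false_of_path (hz v hv hvu).1 (hz v' hv' hv'u).1 hv'u.symm (.inl hzu.symm)
    (.inr (hS.gray_adj_center v hv hvu)) (.inl hbvv') (hz v hv hvu).not_black
    (hz v' hv' hv'u).not_black (not_black_of_gray (hS.gray_adj_center v' hv' hv'u))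

theorem black_leaves_of_white_center (hP : T.IsIndFree (pathGraph 4))
    (hS : T.IsGrayStarComponent C u) (hzu : T.White u z)
    (hz : ∀ v ∈ C, v ≠ u → T.black.Adj z v) (hv : v ∈ C) (hv' : v' ∈ C) (hvu : v ≠ u)
    (hv'u : v' ≠ u) (hvv' : v ≠ v') : T.black.Adj v v' := by
  by_contra hbvv'
  exact hP.false_of_path hvv'.symm hv'u hzu.1.symm (.inl (hz v' hv' hv'u).symm)
    (.inl (hz v hv hvu)) (.inr (hS.gray_adj_center v hv hvu).symm) (mt Adj.symm hbvv')
    (not_black_of_gray (hS.gray_adj_center v' hv' hv'u).symm) hzu.symm.not_black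

theorem false_of_black_center_of_white_center (hP : T.IsIndFree (pathGraph 4))
    (hS : T.IsGrayStarComponent C u) (hzu : T.black.Adj u z)
    (hz : ∀ v ∈ C, v ≠ u → T.White z v) (hz'u : T.White u z')
    (hz' : ∀ v ∈ C, v ≠ u → T.black.Adj z' v) (hv : v ∈ C) (hvu : v ≠ u) : False := by
  have hzv := hz v hv hvu
  have hz'v := hz' v hv hvu
  have huv := hS.gray_adj_center v hv hvu
  by_cases hzz' : T.black.Adj z z'
  · exact hP.false_of_path hzv.1.symm hvu hz'u.1.symm (.inl hz'v.symm) (.inl hzz'.symm)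
      (.inl hzu.symm) hzv.symm.not_black (not_black_of_gray huv.symm) hz'u.symm.not_black
  · have hne : z ≠ z' := by rintro rfl; exact hz'u.not_black hzu
    exact hP.false_of_path hzv.1 hne hz'u.1 (.inl hzu.symm) (.inr huv) (.inl hz'v.symm)
      hzv.not_black hzz' hz'u.not_black

theorem white_or_black_of_forall_black_or_white_center (hP : T.IsIndFree (pathGraph 4))
    (hS : T.IsGrayStarComponent C u) (hv : v ∈ C) (hvu : v ≠ u) {Z : Set V}
    (hZ : ∀ z ∈ Z, (T.black.Adj u z ∧ ∀ v ∈ C, v ≠ u → T.White z v) ∨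
      (T.White u z ∧ ∀ v ∈ C, v ≠ u → T.black.Adj z v)) :
    ((∀ v ∈ C, ∀ w ∈ C, v ≠ u → w ≠ u → v ≠ w → T.White v w) ∧
        (∀ z ∈ Z, ∀ v ∈ C, v ≠ u → T.White z v) ∧ (∀ z ∈ Z, T.black.Adj u z)) ∨
      ((∀ v ∈ C, ∀ w ∈ C, v ≠ u → w ≠ u → v ≠ w → T.black.Adj v w) ∧
        (∀ z ∈ Z, ∀ v ∈ C, v ≠ u → T.black.Adj z v) ∧
        (∀ z ∈ Z, T.White u z)) := by
  by_cases h₁ : ∃ z ∈ Z, T.black.Adj u z ∧ ∀ v ∈ C, v ≠ u → T.White z v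
  · obtain ⟨z, -, hzu, hz⟩ := h₁
    have hZ₁ (z') (hz' : z' ∈ Z) := (hZ z' hz').resolve_right fun ⟨hz'u, hz'⟩ ↦
      hS.false_of_black_center_of_white_center hP hzu hz hz'u hz' hv hvu
    exact .inl ⟨fun v hv w hw hvu hwu hvw ↦ hS.white_leaves_of_black_center hP hzu hz
      hv hw hvu hwu hvw, fun z hz ↦ (hZ₁ z hz).2, fun z hz ↦ (hZ₁ z hz).1⟩
  by_cases h₂ : ∃ z ∈ Z, T.White u z ∧ ∀ v ∈ C, v ≠ u → T.black.Adj z v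
  · obtain ⟨z, -, hzu, hz⟩ := h₂
    have hZ₂ (z') (hz' : z' ∈ Z) := (hZ z' hz').resolve_left fun ⟨hz'u, hz'⟩ ↦
      hS.false_of_black_center_of_white_center hP hz'u hz' hzu hz hv hvu
    exact .inr ⟨fun v hv w hw hvu hwu hvw ↦ hS.black_leaves_of_white_center hP hzu hz
      hv hw hvu hwu hvw, fun z hz ↦ (hZ₂ z hz).2, fun z hz ↦ (hZ₂ z hz).1⟩
  have hZ₀ (z) (hz : z ∈ Z) : False :=
    (hZ z hz).elim (h₁ ⟨z, hz, ·⟩) (h₂ ⟨z, hz, ·⟩)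
  rcases hS.leaves_white_or_black hP with hW | hB
  · exact .inl ⟨hW, fun z hz ↦ (hZ₀ z hz).elim, fun z hz ↦ (hZ₀ z hz).elim⟩
  · exact .inr ⟨hB, fun z hz ↦ (hZ₀ z hz).elim, fun z hz ↦ (hZ₀ z hz).elim⟩

end IsGrayStarComponent

end Trigraph

/-- If `C` is the vertex set of a gray star (with `|C| = k ≥ 2`)
with center `u` forming a gray component of a `P_4`-induced-saturated trigraph `T`,
then the remaining vertices can be partitioned into `X`, `Y`, `Z` with: every
vertex of `X` joined by black edges to all of `C`; every vertex of `Y` joined by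
white edges to all of `C`; and either all edges among the leaves and all edges
from `Z` to the leaves are white while all edges from `Z` to `u` are black, or
all edges among the leaves and from `Z` to the leaves are black while all edges
from `Z` to `u` are white. -/
theorem gray_star_partition {V : Type*} (T : Trigraph V)
    (hT : Trigraph.IsIndSat (SimpleGraph.pathGraph 4) T)
    (C : Set V) (u : V) (huC : u ∈ C) (hC2 : C.Nontrivial)
    (hstar : ∀ v ∈ C, v ≠ u → T.gray.Adj u v)
    (hleaves : ∀ v ∈ C, ∀ w ∈ C, v ≠ u → w ≠ u → ¬ T.gray.Adj v w)
    (hcomp : ∀ v ∈ C, ∀ w : V, T.gray.Adj v w → w ∈ C) :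
    ∃ X Y Z : Set V,
      X ∪ Y ∪ Z = Cᶜ ∧ Disjoint X Y ∧ Disjoint X Z ∧ Disjoint Y Z ∧
      (∀ x ∈ X, ∀ c ∈ C, T.black.Adj x c) ∧
      (∀ y ∈ Y, ∀ c ∈ C, T.White y c) ∧
      (((∀ v ∈ C, ∀ w ∈ C, v ≠ u → w ≠ u → v ≠ w → T.White v w) ∧
        (∀ z ∈ Z, ∀ v ∈ C, v ≠ u → T.White z v) ∧
        (∀ z ∈ Z, T.black.Adj u z)) ∨
       ((∀ v ∈ C, ∀ w ∈ C, v ≠ u → w ≠ u → v ≠ w → T.black.Adj v w) ∧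
        (∀ z ∈ Z, ∀ v ∈ C, v ≠ u → T.black.Adj z v) ∧
        (∀ z ∈ Z, T.White u z))) := by
  obtain ⟨hP, -⟩ := hT
  have hS : T.IsGrayStarComponent C u := ⟨huC, hstar, hleaves, hcomp⟩
  obtain ⟨v₀, hv₀, hv₀u⟩ := hC2.exists_ne u
  set X := {w | w ∉ C ∧ ∀ c ∈ C, T.black.Adj w c}
  set Y := {w | w ∉ C ∧ ∀ c ∈ C, T.White w c}
  have hXY : X ∪ Y ⊆ Cᶜ := Set.union_subset (fun _ ↦ And.left) fun _ ↦ And.left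
  refine ⟨X, Y, Cᶜ \ (X ∪ Y), Set.union_sdiff_cancel hXY,
    Set.disjoint_left.2 fun w hX hY ↦ (hY.2 u huC).not_black (hX.2 u huC),
    Set.disjoint_sdiff_right.mono_left Set.subset_union_left,
    Set.disjoint_sdiff_right.mono_left Set.subset_union_right, fun _ ↦ And.right,
    fun _ ↦ And.right, hS.white_or_black_of_forall_black_or_white_center hP hv₀ hv₀u ?_⟩
  rintro z ⟨hzC, hzXY⟩
  exact hS.black_center_or_white_center hP hzC (fun h ↦ hzXY (.inl ⟨hzC, h⟩))
    fun h ↦ hzXY (.inr ⟨hzC, h⟩)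
end

section
/- Let T be a P_4-induced-saturated trigraph and let {v_1, v_2, v_3} be a gray triangle in T (all three edges v_1v_2, v_1v_3, v_2v_3 are gray). Then V(T) − {v_1, v_2, v_3} can be partitioned into sets X and Y such that for every x ∈ X the edges xv_1, xv_2, xv_3 are all black, and for every y ∈ Y the edges yv_1, yv_2, yv_3 are all white. -/
/-!
Let `u` lie outside the gray triangle `abc` and be joined to `a` by a black or gray edge. Then
`u` is black to `b`: otherwise `b a u c` (if `uc` is black) or `u a c b` (if not) becomes an
induced `P₄` once its gray edges are switched on. Applying this twice, a vertex joined to some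
corner is black to all three, and every other vertex is white to all three.
-/

open SimpleGraph

namespace Trigraph

variable {V : Type*} {W : Type*}

def Joined (T : Trigraph V) (u v : V) : Prop :=
  T.black.Adj u v ∨ T.gray.Adj u v

lemma Joined.symm {T : Trigraph V} {u v : V} (h : T.Joined u v) : T.Joined v u :=
  h.imp SimpleGraph.Adj.symm SimpleGraph.Adj.symm

lemma not_black_of_gray_s12 {T : Trigraph V} {u v : V} (h : T.gray.Adj u v) : ¬ T.black.Adj u v :=
  fun hb => T.disjoint u v ⟨hb, h⟩

lemma exists_realization_hasInducedCopy_pathGraph_four {T : Trigraph V} {a b c d : V}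
    (hab : a ≠ b) (hac : a ≠ c) (had : a ≠ d) (hbc : b ≠ c) (hbd : b ≠ d) (hcd : c ≠ d)
    (jab : T.Joined a b) (jbc : T.Joined b c) (jcd : T.Joined c d)
    (nac : ¬ T.black.Adj a c) (nad : ¬ T.black.Adj a d) (nbd : ¬ T.black.Adj b d) :
    ∃ R, T.IsRealization R ∧ HasInducedCopy (pathGraph 4) R := by
  refine ⟨T.black ⊔ fromEdgeSet {s(a, b), s(b, c), s(c, d)}, ⟨le_sup_left, ?_⟩, ?_⟩
  · refine sup_le le_sup_left ((fromEdgeSet_le _).mpr fun e he => ?_)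
    simp only [Set.mem_sdiff, Set.mem_insert_iff, Set.mem_singleton_iff] at he
    rcases he.1 with rfl | rfl | rfl <;> assumption
  · have hinj : Function.Injective ![a, b, c, d] := by
      intro i j
      fin_cases i <;> fin_cases j <;> simp_all [eq_comm]
    refine ⟨⟨⟨![a, b, c, d], hinj⟩, fun {i j} => ?_⟩⟩
    fin_cases i <;> fin_cases j <;>
      simp_all [pathGraph_adj, eq_comm, adj_comm]

lemma black_of_joined_of_gray_triangle {T : Trigraph V}
    (hT : ∀ R, T.IsRealization R → ¬ HasInducedCopy (pathGraph 4) R) {a b c u : V}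
    (hab : T.gray.Adj a b) (hac : T.gray.Adj a c) (hbc : T.gray.Adj b c)
    (hua : u ≠ a) (hub : u ≠ b) (huc : u ≠ c) (hjoin : T.Joined u a) : T.black.Adj u b := by
  by_contra hnub
  by_cases hbuc : T.black.Adj u c
  · obtain ⟨R, hR, hP⟩ := exists_realization_hasInducedCopy_pathGraph_four
      hab.ne' hub.symm hbc.ne hua.symm hac.ne huc (Or.inr hab.symm) hjoin.symm (Or.inl hbuc)
      (fun h => hnub h.symm) (not_black_of_gray_s12 hbc) (not_black_of_gray_s12 hac)
    exact hT R hR hP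
  · obtain ⟨R, hR, hP⟩ := exists_realization_hasInducedCopy_pathGraph_four
      hua huc hub hac.ne hab.ne hbc.ne' hjoin (Or.inr hac) (Or.inr hbc.symm)
      hbuc hnub (not_black_of_gray_s12 hab)
    exact hT R hR hP

lemma black_corners_of_joined_of_gray_triangle {T : Trigraph V}
    (hT : ∀ R, T.IsRealization R → ¬ HasInducedCopy (pathGraph 4) R) {a b c u : V}
    (hab : T.gray.Adj a b) (hac : T.gray.Adj a c) (hbc : T.gray.Adj b c)
    (hua : u ≠ a) (hub : u ≠ b) (huc : u ≠ c) (hjoin : T.Joined u a) :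
    T.black.Adj u a ∧ T.black.Adj u b ∧ T.black.Adj u c := by
  have hb := black_of_joined_of_gray_triangle hT hab hac hbc hua hub huc hjoin
  exact ⟨black_of_joined_of_gray_triangle hT hab.symm hbc hac hub hua huc (Or.inl hb), hb,
    black_of_joined_of_gray_triangle hT hac hab hbc.symm hua huc hub hjoin⟩

lemma black_corners_or_white_corners_of_gray_triangle {T : Trigraph V}
    (hT : ∀ R, T.IsRealization R → ¬ HasInducedCopy (pathGraph 4) R) {a b c u : V}
    (hab : T.gray.Adj a b) (hac : T.gray.Adj a c) (hbc : T.gray.Adj b c)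
    (hua : u ≠ a) (hub : u ≠ b) (huc : u ≠ c) :
    (T.black.Adj u a ∧ T.black.Adj u b ∧ T.black.Adj u c) ∨
      (T.White u a ∧ T.White u b ∧ T.White u c) := by
  by_cases hja : T.Joined u a
  · exact Or.inl (black_corners_of_joined_of_gray_triangle hT hab hac hbc hua hub huc hja)
  by_cases hjb : T.Joined u b
  · obtain ⟨hb, ha, hc⟩ :=
      black_corners_of_joined_of_gray_triangle hT hab.symm hbc hac hub hua huc hjb
    exact Or.inl ⟨ha, hb, hc⟩
  by_cases hjc : T.Joined u c
  · obtain ⟨hc, ha, hb⟩ :=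
      black_corners_of_joined_of_gray_triangle hT hac.symm hbc.symm hab huc hua hub hjc
    exact Or.inl ⟨ha, hb, hc⟩
  simp only [Joined, not_or] at hja hjb hjc
  exact Or.inr ⟨⟨hua, hja⟩, ⟨hub, hjb⟩, ⟨huc, hjc⟩⟩

end Trigraph

/-- If `{v₁, v₂, v₃}` is a gray triangle in a `P_4`-induced-saturated
trigraph `T`, then the remaining vertices can be partitioned into `X` and `Y` so
that every vertex of `X` is joined to `v₁, v₂, v₃` by black edges and every vertex
of `Y` is joined to `v₁, v₂, v₃` by white edges. -/
theorem gray_triangle_partition {V : Type*} (T : Trigraph V)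
    (hT : Trigraph.IsIndSat (SimpleGraph.pathGraph 4) T)
    (v₁ v₂ v₃ : V) (h12 : T.gray.Adj v₁ v₂) (h13 : T.gray.Adj v₁ v₃)
    (h23 : T.gray.Adj v₂ v₃) :
    ∃ X Y : Set V,
      X ∪ Y = ({v₁, v₂, v₃} : Set V)ᶜ ∧ Disjoint X Y ∧
      (∀ x ∈ X, T.black.Adj x v₁ ∧ T.black.Adj x v₂ ∧ T.black.Adj x v₃) ∧
      (∀ y ∈ Y, T.White y v₁ ∧ T.White y v₂ ∧ T.White y v₃) := by
  refine ⟨({v₁, v₂, v₃} : Set V)ᶜ ∩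
      {x | T.black.Adj x v₁ ∧ T.black.Adj x v₂ ∧ T.black.Adj x v₃},
    ({v₁, v₂, v₃} : Set V)ᶜ ∩ {y | T.White y v₁ ∧ T.White y v₂ ∧ T.White y v₃},
    ?_, ?_, fun x hx => hx.2, fun y hy => hy.2⟩
  · rw [← Set.inter_union_distrib_left, Set.inter_eq_left]
    intro u hu
    simp only [Set.mem_compl_iff, Set.mem_insert_iff, Set.mem_singleton_iff, not_or] at hu
    exact Trigraph.black_corners_or_white_corners_of_gray_triangle hT.1 h12 h13 h23
      hu.1 hu.2.1 hu.2.2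
  · exact Set.disjoint_left.mpr fun u hX hY => hY.2.1.2.1 hX.2.1
end

section
/- Every P_4-induced-saturated trigraph on at least 2 vertices has at least one gray edge. -/
/-!
If `T` had no gray edge, its black graph `G` would be its only realization, hence `P₄`-free.
By Seinsche's theorem a `P₄`-free graph or its complement is disconnected on every vertex set
of size at least two, so recursing into a side of the cut produces twins `u ≠ v` in `G`.
Recoloring `uv` gray only changes the pair `uv`, so an induced `P₄` in a realization of the new
trigraph must contain both `u` and `v`; but they are twins there as well, and `P₄` has no twins.
-/

open SimpleGraph

open Finset

namespace SimpleGraph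

variable {V : Type*} {G : SimpleGraph V} {s : Finset V}

def IsInducedP4 (G : SimpleGraph V) (a b c d : V) : Prop :=
  G.Adj a b ∧ G.Adj b c ∧ G.Adj c d ∧ ¬G.Adj a c ∧ ¬G.Adj a d ∧ ¬G.Adj b d

def P4Free (G : SimpleGraph V) : Prop := ∀ a b c d, ¬G.IsInducedP4 a b c d

lemma IsInducedP4.ne {a b c d : V} (h : G.IsInducedP4 a b c d) :
    a ≠ b ∧ a ≠ c ∧ a ≠ d ∧ b ≠ c ∧ b ≠ d ∧ c ≠ d := by
  obtain ⟨hab, hbc, hcd, hac, had, hbd⟩ := h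
  refine ⟨hab.ne, ?_, ?_, hbc.ne, ?_, hcd.ne⟩
  · rintro rfl; exact had hcd
  · rintro rfl; exact hac hcd.symm
  · rintro rfl; exact had hab

lemma IsInducedP4.of_compl {a b c d : V} (h : Gᶜ.IsInducedP4 a b c d) :
    G.IsInducedP4 c a d b := by
  obtain ⟨-, hac', had', -, hbd', -⟩ := h.ne
  obtain ⟨hab, hbc, hcd, hac, had, hbd⟩ := h
  simp only [compl_adj, not_and, not_not] at *
  exact ⟨(hac hac').symm, had had', (hbd hbd').symm, hcd.2, fun h => hbc.2 h.symm, hab.2⟩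

lemma P4Free.compl (hG : G.P4Free) : Gᶜ.P4Free :=
  fun a b c d h => hG c a d b h.of_compl

lemma IsInducedP4.hasInducedCopy {a b c d : V} (h : G.IsInducedP4 a b c d) :
    Trigraph.HasInducedCopy (pathGraph 4) G := by
  have hne := h.ne
  obtain ⟨hab, hbc, hcd, hac, had, hbd⟩ := h
  refine ⟨⟨⟨![a, b, c, d], ?_⟩, ?_⟩⟩
  · intro i j hij
    fin_cases i <;> fin_cases j <;> simp_all [eq_comm]
  · intro i j
    change G.Adj (![a, b, c, d] i) (![a, b, c, d] j) ↔ _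
    fin_cases i <;> fin_cases j <;> simp [pathGraph_adj, adj_comm, *]

def HasTwins (G : SimpleGraph V) (s : Finset V) : Prop :=
  ∃ u ∈ s, ∃ v ∈ s, u ≠ v ∧ ∀ w ∈ s, w ≠ u → w ≠ v → (G.Adj u w ↔ G.Adj v w)

lemma HasTwins.of_compl (h : Gᶜ.HasTwins s) : G.HasTwins s := by
  obtain ⟨u, hu, v, hv, huv, htwin⟩ := h
  refine ⟨u, hu, v, hv, huv, fun w hw hwu hwv => ?_⟩
  simpa [hwu.symm, hwv.symm, not_iff_not] using htwin w hw hwu hwv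

lemma not_hasTwins_pathGraph_four : ¬(pathGraph 4).HasTwins univ := by
  simp only [HasTwins, pathGraph_adj]
  decide

variable [DecidableEq V] {A : Finset V} {x : V}

def DisconnectedOn (G : SimpleGraph V) (s : Finset V) : Prop :=
  ∃ A ⊆ s, A.Nonempty ∧ (s \ A).Nonempty ∧ ∀ a ∈ A, ∀ b ∈ s \ A, ¬G.Adj a b

lemma exists_adj_of_not_disconnectedOn (h : ¬G.DisconnectedOn s) (hAs : A ⊆ s)
    (hA : A.Nonempty) (hB : (s \ A).Nonempty) : ∃ a ∈ A, ∃ b ∈ s \ A, G.Adj a b := by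
  by_contra! h'
  exact h ⟨A, hAs, hA, hB, h'⟩

lemma not_adj_sdiff_sdiff (hAs : A ⊆ s) (hcut : ∀ a ∈ A, ∀ b ∈ s \ A, ¬G.Adj a b) :
    ∀ a ∈ s \ A, ∀ b ∈ s \ (s \ A), ¬G.Adj a b := by
  rw [Finset.sdiff_sdiff_eq_self hAs]
  exact fun a ha b hb h => hcut b hb a ha h.symm

lemma disconnectedOn_compl_insert (hx : x ∉ s) (hs : s.Nonempty) (h : ∀ y ∈ s, G.Adj x y) :
    Gᶜ.DisconnectedOn (insert x s) := by
  refine ⟨{x}, by simp, by simp, ?_, ?_⟩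
  · simpa [insert_sdiff_of_mem, sdiff_singleton_eq_erase, erase_eq_of_notMem hx] using hs
  · simp only [mem_singleton, mem_sdiff, mem_insert, compl_adj, not_and, not_not]
    rintro a rfl b ⟨hb | hb, hbx⟩ -
    · exact absurd hb hbx
    · exact h b hb

/-- Connectivity of `insert x s` gives an edge `p q` from a non-neighbour `p` of `x` to a
neighbour `q`, and a neighbour `r` of `x` on the other side of the cut from `q`; then
`p q x r` is an induced `P₄`. -/
lemma P4Free.forall_adj_of_not_disconnectedOn_insert (hG : G.P4Free) (hx : x ∉ s)
    (hAs : A ⊆ s) (hA : A.Nonempty) (hB : (s \ A).Nonempty)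
    (hcut : ∀ a ∈ A, ∀ b ∈ s \ A, ¬G.Adj a b) (hconn : ¬G.DisconnectedOn (insert x s)) :
    ∀ y ∈ s, G.Adj x y := by
  classical
  by_contra! ⟨y, hy, hxy⟩
  obtain ⟨p, hp, q, hq, hpq⟩ := exists_adj_of_not_disconnectedOn hconn
    (A := s.filter (¬G.Adj x ·)) ((filter_subset _ _).trans (subset_insert _ _))
    ⟨y, mem_filter.2 ⟨hy, hxy⟩⟩ ⟨x, by simp [hx]⟩
  rw [mem_filter] at hp
  obtain ⟨hqs, hxq⟩ : q ∈ s ∧ G.Adj x q := by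
    simp only [mem_sdiff, mem_insert, mem_filter, not_and, not_not] at hq
    obtain ⟨rfl | hqs, hxq⟩ := hq
    · exact absurd hpq.symm hp.2
    · exact ⟨hqs, hxq hqs⟩
  wlog hqA : q ∈ A generalizing A
  · exact this sdiff_subset hB (by rwa [Finset.sdiff_sdiff_eq_self hAs])
      (not_adj_sdiff_sdiff hAs hcut) (mem_sdiff.2 ⟨hqs, hqA⟩)
  have hpA : p ∈ A := by
    by_contra hpA
    exact hcut q hqA p (mem_sdiff.2 ⟨hp.1, hpA⟩) hpq.symm
  obtain ⟨r, hr, z, hz, hrz⟩ := exists_adj_of_not_disconnectedOn hconn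
    (sdiff_subset.trans (subset_insert _ _)) hB ⟨x, by simp [hx]⟩
  obtain rfl : z = x := by
    simp only [mem_sdiff, mem_insert, not_and, not_not] at hz
    obtain ⟨rfl | hzs, hzA⟩ := hz
    · rfl
    · exact absurd hrz.symm (hcut z (hzA hzs) r hr)
  exact hG p q z r
    ⟨hpq, hxq.symm, hrz.symm, fun h => hp.2 h.symm, hcut p hpA r hr, hcut q hqA r hr⟩

lemma P4Free.disconnectedOn_insert_or_compl (hG : G.P4Free) (hx : x ∉ s)
    (h : G.DisconnectedOn s) :
    G.DisconnectedOn (insert x s) ∨ Gᶜ.DisconnectedOn (insert x s) := by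
  by_cases hconn : G.DisconnectedOn (insert x s)
  · exact Or.inl hconn
  obtain ⟨A, hAs, hA, hB, hcut⟩ := h
  exact Or.inr <| disconnectedOn_compl_insert hx (hA.mono hAs)
    (hG.forall_adj_of_not_disconnectedOn_insert hx hAs hA hB hcut hconn)

/-- Seinsche's theorem. -/
theorem P4Free.disconnectedOn_or_compl (hG : G.P4Free) (hs : 2 ≤ #s) :
    G.DisconnectedOn s ∨ Gᶜ.DisconnectedOn s := by
  induction s using Finset.induction_on with
  | empty => simp at hs
  | insert x s hx ih =>
    rw [card_insert_of_notMem hx] at hs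
    by_cases hs2 : 2 ≤ #s
    · rcases ih hs2 with h | h
      · exact hG.disconnectedOn_insert_or_compl hx h
      · simpa only [compl_compl, or_comm] using hG.compl.disconnectedOn_insert_or_compl hx h
    obtain ⟨y, rfl⟩ := card_eq_one.1 (by omega : #s = 1)
    have hxy : x ≠ y := by simpa using hx
    by_cases hadj : G.Adj x y
    · exact Or.inr <| disconnectedOn_compl_insert hx (singleton_nonempty y) (by simpa)
    · left
      simpa using disconnectedOn_compl_insert (G := Gᶜ) hx (singleton_nonempty y)
        (by simpa [hxy] using hadj)

lemma HasTwins.mono (hAs : A ⊆ s) (hcut : ∀ a ∈ A, ∀ b ∈ s \ A, ¬G.Adj a b)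
    (h : G.HasTwins A) : G.HasTwins s := by
  obtain ⟨u, hu, v, hv, huv, htwin⟩ := h
  refine ⟨u, hAs hu, v, hAs hv, huv, fun w hw hwu hwv => ?_⟩
  by_cases hwA : w ∈ A
  · exact htwin w hwA hwu hwv
  · have hw' : w ∈ s \ A := mem_sdiff.2 ⟨hw, hwA⟩
    exact iff_of_false (hcut u hu w hw') (hcut v hv w hw')

lemma hasTwins_of_card_eq_two (hs : #s = 2) : G.HasTwins s := by
  obtain ⟨u, v, huv, rfl⟩ := card_eq_two.1 hs
  refine ⟨u, by simp, v, by simp, huv, fun w hw hwu hwv => ?_⟩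
  simp_all

lemma DisconnectedOn.hasTwins (h : G.DisconnectedOn s)
    (ih : ∀ t ⊂ s, 2 ≤ #t → G.HasTwins t) : G.HasTwins s := by
  obtain ⟨A, hAs, hA, hB, hcut⟩ := h
  by_cases hA2 : 2 ≤ #A
  · exact (ih A ⟨hAs, sdiff_nonempty.1 hB⟩ hA2).mono hAs hcut
  by_cases hB2 : 2 ≤ #(s \ A)
  · exact (ih _ (sdiff_ssubset hAs hA) hB2).mono sdiff_subset (not_adj_sdiff_sdiff hAs hcut)
  apply hasTwins_of_card_eq_two
  have := card_sdiff_add_card_eq_card hAs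
  have := hA.card_pos
  have := hB.card_pos
  omega

theorem P4Free.hasTwins (hG : G.P4Free) (hs : 2 ≤ #s) : G.HasTwins s := by
  induction s using Finset.strongInduction generalizing G with
  | H s ih =>
    rcases hG.disconnectedOn_or_compl hs with h | h
    · exact h.hasTwins fun t ht => ih t ht hG
    · exact (h.hasTwins fun t ht => ih t ht hG.compl).of_compl

end SimpleGraph

namespace Trigraph

variable {V W : Type*}

lemma IsRealization.flip_adj_iff {T : Trigraph V} {R : SimpleGraph V} {u v a b : V}
    (hR : (T.flip u v).IsRealization R) (hab : s(a, b) ≠ s(u, v)) (hgray : ¬T.gray.Adj a b) :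
    R.Adj a b ↔ T.black.Adj a b := by
  constructor
  · intro h
    have := hR.2 h
    simp only [flip, single, sup_adj, sdiff_adj, fromEdgeSet_adj, Set.mem_singleton_iff] at this
    tauto
  · intro h
    exact hR.1 ⟨h, by simp [single, hab]⟩

lemma HasInducedCopy.of_agree_off_twins [Fintype W] [DecidableEq W] {H : SimpleGraph W}
    (hH : ¬H.HasTwins Finset.univ) {R G : SimpleGraph V} {u v : V} (huv : u ≠ v)
    (hagree : ∀ a b, s(a, b) ≠ s(u, v) → (R.Adj a b ↔ G.Adj a b))
    (htwin : ∀ w, w ≠ u → w ≠ v → (G.Adj u w ↔ G.Adj v w))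
    (h : HasInducedCopy H R) : HasInducedCopy H G := by
  obtain ⟨g⟩ := h
  by_cases hboth : (∃ i, g i = u) ∧ ∃ j, g j = v
  · obtain ⟨⟨i, rfl⟩, j, rfl⟩ := hboth
    refine absurd ⟨i, Finset.mem_univ _, j, Finset.mem_univ _, ?_, fun k _ hki hkj => ?_⟩ hH
    · rintro rfl
      exact huv rfl
    have hki' : g k ≠ g i := g.injective.ne hki
    have hkj' : g k ≠ g j := g.injective.ne hkj
    calc H.Adj i k ↔ R.Adj (g i) (g k) := g.map_rel_iff.symm
      _ ↔ G.Adj (g i) (g k) := hagree _ _ (hkj' ∘ Sym2.congr_right.1)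
      _ ↔ G.Adj (g j) (g k) := htwin _ hki' hkj'
      _ ↔ R.Adj (g j) (g k) :=
        (hagree _ _ (by rw [Sym2.eq_swap]; exact hki' ∘ Sym2.congr_left.1)).symm
      _ ↔ H.Adj j k := g.map_rel_iff
  · refine ⟨⟨g.toEmbedding, fun {a b} => ?_⟩⟩
    rw [← g.map_rel_iff, ← hagree]
    · rfl
    rintro hab
    rcases Sym2.eq_iff.1 hab with ⟨ha, hb⟩ | ⟨ha, hb⟩
    · exact hboth ⟨⟨a, ha⟩, b, hb⟩
    · exact hboth ⟨⟨b, hb⟩, a, ha⟩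

end Trigraph

/-- Every `P_4`-induced-saturated trigraph on at least `2` vertices
has a gray edge. -/
theorem exists_gray_edge {n : ℕ} (hn : 2 ≤ n) (T : Trigraph (Fin n))
    (hT : Trigraph.IsIndSat (SimpleGraph.pathGraph 4) T) :
    ∃ u v : Fin n, T.gray.Adj u v := by
  by_contra! hgray
  have hreal : T.IsRealization T.black := ⟨le_rfl, le_sup_left⟩
  have hfree : T.black.P4Free := fun a b c d h => hT.1 _ hreal h.hasInducedCopy
  obtain ⟨u, -, v, -, huv, htwin⟩ :=
    hfree.hasTwins (s := Finset.univ) (by simpa using hn)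
  obtain ⟨R, hR, hcopy⟩ := hT.2 u v huv (hgray u v)
  exact hT.1 _ hreal <| hcopy.of_agree_off_twins not_hasTwins_pathGraph_four huv
    (fun a b hab => hR.flip_adj_iff hab (hgray a b))
    (fun w => htwin w (Finset.mem_univ w))
end
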